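/- arXiv:1908.01182 — 2 statements merged into one kernel-verified Lean document; each statement's English description precedes it below -/
import Mathlib

section
/- Let g, h₁, …, hₙ be mutually independent random variables, each with the exponential distribution of rate 1 (density e^{−x} on [0,∞)), and let a₁, …, aₙ ≥ 0 be real constants. Then P(g ≥ Σ_{j=1}^{n} a_j·h_j) = Π_{j=1}^{n} 1/(1 + a_j). -/
/-!
By independence, the joint law of `(g, h₀, …, hₙ₋₁)` is the product of `n + 1` copies of
`Exp(1)`. Integrating out `g` first and using `P(g ≥ t) = e^{-t}` for `t ≥ 0` turns the
probability into `E[exp(-∑ aⱼ hⱼ)] = ∏ E[exp(-aⱼ hⱼ)]`, and each factor is the Laplace transform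
`1 / (1 + aⱼ)` of `Exp(1)`.
-/

open MeasureTheory ProbabilityTheory Real Set
open scoped ENNReal

lemma expMeasure_eq_withDensity (r : ℝ) : expMeasure r = volume.withDensity (exponentialPDF r) :=
  rfl

lemma measurable_exponentialPDF (r : ℝ) : Measurable (exponentialPDF r) :=
  (measurable_exponentialPDFReal r).ennreal_ofReal

lemma ae_nonneg_expMeasure (r : ℝ) : ∀ᵐ x ∂expMeasure r, 0 ≤ x := by
  rw [expMeasure_eq_withDensity, ae_withDensity_iff (measurable_exponentialPDF r)]
  refine ae_of_all _ fun x hx => ?_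
  by_contra hneg
  exact hx (exponentialPDF_of_neg (not_le.1 hneg))

lemma exponentialPDF_mul_exp_neg_mul {r a : ℝ} (hra : 0 < r + a) (x : ℝ) :
    exponentialPDF r x * ENNReal.ofReal (exp (-(a * x)))
      = ENNReal.ofReal (r / (r + a)) * exponentialPDF (r + a) x := by
  rcases le_or_gt 0 x with hx | hx
  · rw [exponentialPDF_of_nonneg hx, exponentialPDF_of_nonneg hx,
      ← ENNReal.ofReal_mul' (by positivity), ← ENNReal.ofReal_mul' (by positivity)]
    congr 1
    field_simp
    rw [mul_assoc, ← exp_add]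
    ring_nf
  · simp [exponentialPDF_of_neg hx]

lemma lintegral_exp_neg_mul_expMeasure {r a : ℝ} (hra : 0 < r + a) :
    ∫⁻ x, ENNReal.ofReal (exp (-(a * x))) ∂expMeasure r = ENNReal.ofReal (r / (r + a)) := by
  rw [expMeasure_eq_withDensity, lintegral_withDensity_eq_lintegral_mul _
    (measurable_exponentialPDF r) (by fun_prop)]
  simp only [Pi.mul_apply, exponentialPDF_mul_exp_neg_mul hra]
  rw [lintegral_const_mul _ (measurable_exponentialPDF _), lintegral_exponentialPDF_eq_one hra,
    mul_one]

lemma expMeasure_Ici {r t : ℝ} (hr : 0 < r) (ht : 0 ≤ t) :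
    expMeasure r (Ici t) = ENNReal.ofReal (exp (-(r * t))) := by
  have := isProbabilityMeasure_expMeasure hr
  have : NullSingletonClass (expMeasure r) := nullSingletonClass_withDensity _
  rw [← compl_Iio, prob_compl_eq_one_sub measurableSet_Iio, measure_congr Iio_ae_eq_Iic,
    ← ofReal_cdf, cdf_expMeasure_eq hr, if_pos ht, ← ENNReal.ofReal_one,
    ← ENNReal.ofReal_sub _ (sub_nonneg.2 (exp_le_one_iff.2 (by nlinarith))), sub_sub_cancel]

lemma lintegral_pi_prod_eq_prod {ι : Type*} [Fintype ι] {Ω : ι → Type*}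
    [∀ i, MeasurableSpace (Ω i)] (μ : ∀ i, Measure (Ω i)) [∀ i, IsProbabilityMeasure (μ i)]
    {f : ∀ i, Ω i → ℝ≥0∞} (hf : ∀ i, Measurable (f i)) :
    ∫⁻ x, ∏ i, f i (x i) ∂Measure.pi μ = ∏ i, ∫⁻ y, f i y ∂μ i := by
  rw [lintegral_prod_eq_prod_lintegral_of_indepFun _ _
    (iIndepFun_pi fun i => (hf i).aemeasurable) fun i => (hf i).comp (measurable_pi_apply i)]
  exact Finset.prod_congr rfl fun i _ => (measurePreserving_eval μ i).lintegral_comp (hf i)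

lemma pi_expMeasure_setOf_sum_mul_le (n : ℕ) (a : Fin n → ℝ) (ha : ∀ j, 0 ≤ a j) :
    Measure.pi (fun _ : Fin (n + 1) => expMeasure 1) {x | ∑ j, a j * x j.succ ≤ x 0}
      = ENNReal.ofReal (∏ j, 1 / (1 + a j)) := by
  have := isProbabilityMeasure_expMeasure one_pos
  have hs : MeasurableSet {p : ℝ × (Fin n → ℝ) | ∑ j, a j * p.2 j ≤ p.1} :=
    measurableSet_le (by fun_prop) (by fun_prop)
  have hnonneg : ∀ᵐ y ∂Measure.pi (fun _ : Fin n => expMeasure 1), ∀ j, 0 ≤ y j :=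
    ae_all_iff.2 fun j => Measure.tendsto_eval_ae_ae.eventually (ae_nonneg_expMeasure 1)
  calc Measure.pi (fun _ : Fin (n + 1) => expMeasure 1) {x | ∑ j, a j * x j.succ ≤ x 0}
      = (expMeasure 1).prod (Measure.pi fun _ : Fin n => expMeasure 1)
          {p | ∑ j, a j * p.2 j ≤ p.1} := by
        rw [← (measurePreserving_piFinSuccAbove (fun _ => expMeasure 1) 0).measure_preimage_equiv]
        rfl
    _ = ∫⁻ y, expMeasure 1 (Ici (∑ j, a j * y j)) ∂Measure.pi fun _ : Fin n => expMeasure 1 :=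
        Measure.prod_apply_symm hs
    _ = ∫⁻ y, ∏ j, ENNReal.ofReal (exp (-(a j * y j))) ∂Measure.pi fun _ => expMeasure 1 := by
        refine lintegral_congr_ae (hnonneg.mono fun y hy => ?_)
        beta_reduce
        rw [expMeasure_Ici one_pos (Finset.sum_nonneg fun j _ => mul_nonneg (ha j) (hy j)),
          ← ENNReal.ofReal_prod_of_nonneg fun j _ => (exp_pos _).le, ← exp_sum, one_mul,
          Finset.sum_neg_distrib]
    _ = ∏ j, ENNReal.ofReal (1 / (1 + a j)) := by
        rw [lintegral_pi_prod_eq_prod (f := fun j x => ENNReal.ofReal (exp (-(a j * x)))) _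
          fun j => by fun_prop]
        exact Finset.prod_congr rfl fun j _ => lintegral_exp_neg_mul_expMeasure (by linarith [ha j])
    _ = ENNReal.ofReal (∏ j, 1 / (1 + a j)) :=
        (ENNReal.ofReal_prod_of_nonneg fun j _ => by have := ha j; positivity).symm

theorem stmt_3_general {Ω : Type*} [MeasurableSpace Ω] (P : Measure Ω)
    (n : ℕ) (g : Ω → ℝ) (h : Fin n → Ω → ℝ)
    (hglaw : Measure.map g P = expMeasure 1)
    (hhlaw : ∀ j, Measure.map (h j) P = expMeasure 1)
    (hindep : iIndepFun
      (Fin.cons g h : Fin (n + 1) → Ω → ℝ) P)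
    (a : Fin n → ℝ) (ha : ∀ j, 0 ≤ a j) :
    P {ω | ∑ j, a j * h j ω ≤ g ω} = ENNReal.ofReal (∏ j, 1 / (1 + a j)) := by
  have := isProbabilityMeasure_expMeasure one_pos
  set X : Fin (n + 1) → Ω → ℝ := Fin.cons g h
  have hlaw : ∀ i, P.map (X i) = expMeasure 1 := Fin.cases hglaw hhlaw
  have hX : ∀ i, AEMeasurable (X i) P := fun i =>
    aemeasurable_of_map_neZero (by rw [hlaw i]; infer_instance)
  have hjoint : P.map (fun ω i => X i ω) = Measure.pi fun _ => expMeasure 1 := by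
    rw [hindep.map_fun_eq_pi_map hX]
    simp_rw [hlaw]
  calc P {ω | ∑ j, a j * h j ω ≤ g ω}
      = P.map (fun ω i => X i ω) {x | ∑ j, a j * x j.succ ≤ x 0} := by
        rw [Measure.map_apply_of_aemeasurable (aemeasurable_pi_lambda _ hX)
          (measurableSet_le (by fun_prop) (by fun_prop))]
        rfl
    _ = ENNReal.ofReal (∏ j, 1 / (1 + a j)) := by
        rw [hjoint, pi_expMeasure_setOf_sum_mul_le n a ha]

/-- If `g, h 0, …, h (n-1)` are mutually independent, each exponentially distributed with
rate 1, and `a j ≥ 0` are constants, then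
`P(g ≥ Σ_j a j · h j) = Π_j 1 / (1 + a j)`. -/
theorem stmt_3 {Ω : Type*} [MeasurableSpace Ω] (P : Measure Ω) [IsProbabilityMeasure P]
    (n : ℕ) (g : Ω → ℝ) (h : Fin n → Ω → ℝ)
    (hglaw : Measure.map g P = expMeasure 1)
    (hhlaw : ∀ j, Measure.map (h j) P = expMeasure 1)
    (hindep : iIndepFun
      (Fin.cons g h : Fin (n + 1) → Ω → ℝ) P)
    (a : Fin n → ℝ) (ha : ∀ j, 0 ≤ a j) :
    P {ω | ∑ j, a j * h j ω ≤ g ω} = ENNReal.ofReal (∏ j, 1 / (1 + a j)) :=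
  stmt_3_general P n g h hglaw hhlaw hindep a ha
end

section
/- Let N be a Poisson(μ) random variable with μ ≥ 0; let X₁, X₂, … be i.i.d. real-valued random variables with common law ν (a probability measure on ℝ); let g₁, g₂ and h_{1,1}, h_{1,2}, h_{2,1}, h_{2,2}, … be i.i.d. random variables with the exponential distribution of rate 1; assume N, (X_k), (h_{k,1}), (h_{k,2}), g₁, g₂ are all mutually independent; let θ₁, θ₂ ≥ 0 and let c₁, c₂ : ℝ → [0,∞) be measurable. Then P(g₁ ≥ θ₁·Σ_{k=1}^{N} c₁(X_k)·h_{k,1} and g₂ ≥ θ₂·Σ_{k=1}^{N} c₂(X_k)·h_{k,2}) = exp(−μ·∫_ℝ (1 − 1/((1 + θ₁·c₁(x))·(1 + θ₂·c₂(x)))) dν(x)), where empty sums (when N = 0) equal 0. -/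
/-!
Given `N = n`, which is independent of everything else, the success event involves only the
triples `(X k, h₁ k, h₂ k)`, `k < n`, and the gains `g₁, g₂`. Since `P(s ≤ g) = e^{-s}` for `s ≥ 0`
and `(g₁, g₂)` is independent of the interference, its probability is `E[e^{-θ₁ I₁} e^{-θ₂ I₂}]`.
The exponent splits over the i.i.d. triples, and each factor is `∫ 1/((1 + θ₁ c₁)(1 + θ₂ c₂)) dν`:
the two links share the location `X k`, and `E[e^{-a h}] = 1/(1 + a)` for `h ~ Exp(1)`.
Averaging `p ^ n` against `Poisson(μ)` gives `exp(-μ(1 - p))`.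
-/

open MeasureTheory ProbabilityTheory

/-- Index type collecting the common interferer locations `X k`, the per-link interferer
fading gains `H1 k`, `H2 k`, the desired-signal fading gains `G1`, `G2`, and the number of
interferers `N`. -/
inductive MixIdx₂ where
  | X (k : ℕ)
  | H1 (k : ℕ)
  | H2 (k : ℕ)
  | G1
  | G2
  | N

def MixIdx₂.type : MixIdx₂ → Type
  | .X _ => ℝ
  | .H1 _ => ℝ
  | .H2 _ => ℝ
  | .G1 => ℝ
  | .G2 => ℝ
  | .N => ℕ

instance (i : MixIdx₂) : MeasurableSpace i.type := by
  cases i <;> (dsimp [MixIdx₂.type]; infer_instance)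

def mixFam₂ {Ω : Type*} (N : Ω → ℕ) (X h₁ h₂ : ℕ → Ω → ℝ) (g₁ g₂ : Ω → ℝ) :
    ∀ i : MixIdx₂, Ω → i.type
  | .X k => X k
  | .H1 k => h₁ k
  | .H2 k => h₂ k
  | .G1 => g₁
  | .G2 => g₂
  | .N => N

open Real Set
open scoped ENNReal NNReal Nat

lemma ofReal_exp_neg_mul_sum {ι : Type*} (s : Finset ι) (θ : ℝ) (a : ι → ℝ) :
    ENNReal.ofReal (exp (-(θ * ∑ k ∈ s, a k))) = ∏ k ∈ s, ENNReal.ofReal (exp (-(θ * a k))) := by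
  rw [Finset.mul_sum, ← Finset.sum_neg_distrib, exp_sum,
    ENNReal.ofReal_prod_of_nonneg fun k _ => (exp_pos _).le]

lemma integrable_one_div_one_add_mul_one_add {ν : Measure ℝ} [IsFiniteMeasure ν] {a b : ℝ → ℝ}
    (ha : Measurable a) (hb : Measurable b) (ha0 : ∀ x, 0 ≤ a x) (hb0 : ∀ x, 0 ≤ b x) :
    Integrable (fun x => 1 / ((1 + a x) * (1 + b x))) ν := by
  have hmeas : Measurable fun x => 1 / ((1 + a x) * (1 + b x)) := by fun_prop
  refine Integrable.of_bound hmeas.aestronglyMeasurable 1 (ae_of_all _ fun x => ?_)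
  have hab : 1 ≤ (1 + a x) * (1 + b x) := by nlinarith [ha0 x, hb0 x]
  rw [Real.norm_of_nonneg (by positivity)]
  exact div_le_one_of_le₀ hab (by positivity)

namespace ProbabilityTheory

lemma lintegral_Ioi_exp_neg_mul {b : ℝ} (hb : 0 < b) (s : ℝ) :
    ∫⁻ x in Ioi s, ENNReal.ofReal (exp (-(b * x))) = ENNReal.ofReal (exp (-(b * s)) / b) := by
  have h := integral_exp_mul_Ioi (neg_lt_zero.mpr hb) s
  simp only [neg_mul, div_neg] at h
  rw [← ofReal_integral_eq_lintegral_ofReal, h, neg_div, neg_neg]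
  · have hint := integrableOn_exp_mul_Ioi (neg_lt_zero.mpr hb) s
    simp only [neg_mul] at hint
    exact hint
  · exact ae_of_all _ fun x => (exp_pos _).le

lemma expMeasure_eq_withDensity (r : ℝ) :
    expMeasure r = volume.withDensity (exponentialPDF r) := rfl

lemma expMeasure_Iio_zero (r : ℝ) : expMeasure r (Iio 0) = 0 := by
  rw [expMeasure_eq_withDensity, withDensity_apply _ measurableSet_Iio]
  exact lintegral_exponentialPDF_of_nonpos le_rfl

lemma ae_nonneg_of_map_eq_expMeasure {Ω : Type*} [MeasurableSpace Ω] {P : Measure Ω}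
    {f : Ω → ℝ} {r : ℝ} (hf : Measurable f) (hlaw : P.map f = expMeasure r) :
    ∀ᵐ ω ∂P, 0 ≤ f ω := by
  have h : ∀ᵐ x ∂expMeasure r, 0 ≤ x := by
    simp only [ae_iff, not_le]
    exact expMeasure_Iio_zero r
  exact ae_of_ae_map hf.aemeasurable (hlaw ▸ h)

lemma ae_nonneg_mul_sum_of_map_eq_expMeasure {Ω ι : Type*} [MeasurableSpace Ω] [Countable ι]
    {P : Measure Ω} {r θ : ℝ} {w h : ι → Ω → ℝ} (hθ : 0 ≤ θ) (hw : ∀ k ω, 0 ≤ w k ω)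
    (hh : ∀ k, Measurable (h k)) (hlaw : ∀ k, P.map (h k) = expMeasure r) (s : Finset ι) :
    ∀ᵐ ω ∂P, 0 ≤ θ * ∑ k ∈ s, w k ω * h k ω := by
  filter_upwards [ae_all_iff.mpr fun k => ae_nonneg_of_map_eq_expMeasure (hh k) (hlaw k)]
    with ω hω
  exact mul_nonneg hθ (Finset.sum_nonneg fun k _ => mul_nonneg (hw k ω) (hω k))

lemma expMeasure_Ici {r s : ℝ} (hr : 0 < r) (hs : 0 ≤ s) :
    expMeasure r (Ici s) = ENNReal.ofReal (exp (-(r * s))) := by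
  rw [expMeasure_eq_withDensity, withDensity_apply _ measurableSet_Ici,
    setLIntegral_congr Ioi_ae_eq_Ici.symm,
    setLIntegral_congr_fun measurableSet_Ioi fun x hx =>
      by rw [exponentialPDF_of_nonneg (hs.trans (le_of_lt hx)), ENNReal.ofReal_mul hr.le],
    lintegral_const_mul _ (by fun_prop), lintegral_Ioi_exp_neg_mul hr, ← ENNReal.ofReal_mul hr.le,
    mul_div_cancel₀ _ hr.ne']

lemma lintegral_exp_neg_mul_expMeasure {r a : ℝ} (hr : 0 < r) (ha : 0 ≤ a) :
    ∫⁻ u, ENNReal.ofReal (exp (-(a * u))) ∂expMeasure r = ENNReal.ofReal (r / (r + a)) := by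
  have hra : 0 < r + a := by linarith
  have hdensity : ∀ x ∈ Ioi (0 : ℝ), exponentialPDF r x * ENNReal.ofReal (exp (-(a * x)))
      = ENNReal.ofReal r * ENNReal.ofReal (exp (-((r + a) * x))) := fun x hx => by
    rw [exponentialPDF_of_nonneg (le_of_lt hx), ← ENNReal.ofReal_mul (by positivity), mul_assoc,
      ← exp_add, ← neg_add, ← add_mul, ENNReal.ofReal_mul hr.le]
  have hsupport : Function.support
      (fun x => exponentialPDF r x * ENNReal.ofReal (exp (-(a * x)))) ⊆ Ici 0 := by
    intro x hx
    by_contra hneg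
    simp [exponentialPDF_of_neg (not_le.mp hneg)] at hx
  rw [expMeasure_eq_withDensity, lintegral_withDensity_eq_lintegral_mul _
      (show Measurable (exponentialPDF r) from (measurable_exponentialPDFReal r).ennreal_ofReal)
      (by fun_prop), Pi.mul_def, ← setLIntegral_eq_of_support_subset hsupport,
    setLIntegral_congr Ioi_ae_eq_Ici.symm, setLIntegral_congr_fun measurableSet_Ioi hdensity,
    lintegral_const_mul _ (by fun_prop), lintegral_Ioi_exp_neg_mul hra, mul_zero, neg_zero,
    exp_zero, ← ENNReal.ofReal_mul hr.le, mul_one_div]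

lemma lintegral_pow_poissonMeasure (r : ℝ≥0) {p : ℝ} (hp : 0 ≤ p) :
    ∫⁻ n, ENNReal.ofReal p ^ n ∂poissonMeasure r = ENNReal.ofReal (exp (-(r * (1 - p)))) := by
  have hsum : HasSum (fun n : ℕ => p ^ n * (exp (-r) * r ^ n / n !)) (exp (-(r * (1 - p)))) := by
    have h := (NormedSpace.expSeries_div_hasSum_exp ((r : ℝ) * p)).mul_left (exp (-r))
    rw [← exp_eq_exp_ℝ, ← exp_add] at h
    have hterm : (fun n : ℕ => p ^ n * (exp (-r) * r ^ n / n !)) =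
        fun n => exp (-r) * ((r * p) ^ n / n !) := by
      ext n
      ring
    rw [hterm, show -(r * (1 - p)) = -r + r * p by ring]
    exact h
  simp_rw [lintegral_countable', poissonMeasure_singleton, ← ENNReal.ofReal_pow hp,
    ← ENNReal.ofReal_mul (pow_nonneg hp _)]
  rw [← ENNReal.ofReal_tsum_of_nonneg (fun n => by positivity) hsum.summable, hsum.tsum_eq]

lemma measure_setOf_mem_eq_lintegral_map {Ω ι : Type*} [MeasurableSpace Ω] [MeasurableSpace ι]
    [Countable ι] [MeasurableSingletonClass ι] {P : Measure Ω} {N : Ω → ι} {A : ι → Set Ω}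
    (hN : Measurable N) (hA : ∀ i, MeasurableSet (A i))
    (hind : ∀ i, IndepSet (N ⁻¹' {i}) (A i) P) :
    P {ω | ω ∈ A (N ω)} = ∫⁻ i, P (A i) ∂P.map N := by
  have hunion : {ω | ω ∈ A (N ω)} = ⋃ i, N ⁻¹' {i} ∩ A i := by
    ext ω
    simp
  have hdisj : Pairwise (Function.onFun Disjoint fun i => N ⁻¹' {i} ∩ A i) := fun i j hij =>
    ((disjoint_singleton.mpr hij).preimage N).mono inter_subset_left inter_subset_left
  rw [hunion, measure_iUnion hdisj fun i => (hN (measurableSet_singleton i)).inter (hA i),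
    lintegral_countable']
  refine tsum_congr fun i => ?_
  rw [(hind i).measure_inter_eq_mul, Measure.map_apply hN (measurableSet_singleton i), mul_comm]

lemma Indep.indepFun_of_measurable {Ω β γ : Type*} [MeasurableSpace β] [MeasurableSpace γ]
    {m₁ m₂ _ : MeasurableSpace Ω} {P : Measure Ω} (h : Indep m₁ m₂ P)
    {Y : Ω → β} {Z : Ω → γ} (hY : Measurable[m₁] Y) (hZ : Measurable[m₂] Z) :
    IndepFun Y Z P :=
  (IndepFun_iff_Indep Y Z P).mpr (indep_of_indep_of_le h hY.comap_le hZ.comap_le)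

lemma map_prodMk_prodMk_eq_prod_of_indepFun {Ω α β γ : Type*} [MeasurableSpace Ω]
    [MeasurableSpace α] [MeasurableSpace β] [MeasurableSpace γ] {P : Measure Ω}
    [IsFiniteMeasure P] {X : Ω → α} {Y : Ω → β} {Z : Ω → γ}
    (hX : Measurable X) (hY : Measurable Y) (hZ : Measurable Z)
    (hXYZ : IndepFun X (fun ω => (Y ω, Z ω)) P) (hYZ : IndepFun Y Z P) :
    P.map (fun ω => (X ω, Y ω, Z ω)) = (P.map X).prod ((P.map Y).prod (P.map Z)) := by
  rw [(indepFun_iff_map_prod_eq_prod_map_map hX.aemeasurable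
      (hY.prodMk hZ).aemeasurable).mp hXYZ,
    (indepFun_iff_map_prod_eq_prod_map_map hY.aemeasurable hZ.aemeasurable).mp hYZ]

lemma measure_le_and_le_eq_lintegral_of_indepFun {Ω : Type*} [MeasurableSpace Ω]
    {P : Measure Ω} [IsFiniteMeasure P] {S₁ S₂ g₁ g₂ : Ω → ℝ} {r : ℝ} (hr : 0 < r)
    (hS₁ : Measurable S₁) (hS₂ : Measurable S₂) (hg₁ : Measurable g₁) (hg₂ : Measurable g₂)
    (hS₁0 : ∀ᵐ ω ∂P, 0 ≤ S₁ ω) (hS₂0 : ∀ᵐ ω ∂P, 0 ≤ S₂ ω)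
    (hind : IndepFun (fun ω => (S₁ ω, S₂ ω)) (fun ω => (g₁ ω, g₂ ω)) P)
    (hg : IndepFun g₁ g₂ P) (hg₁law : P.map g₁ = expMeasure r)
    (hg₂law : P.map g₂ = expMeasure r) :
    P {ω | S₁ ω ≤ g₁ ω ∧ S₂ ω ≤ g₂ ω} =
      ∫⁻ ω, ENNReal.ofReal (exp (-(r * S₁ ω))) * ENNReal.ofReal (exp (-(r * S₂ ω))) ∂P := by
  have : IsProbabilityMeasure (expMeasure r) := isProbabilityMeasure_expMeasure hr
  set C : Set ((ℝ × ℝ) × ℝ × ℝ) := {p | p.1.1 ≤ p.2.1 ∧ p.1.2 ≤ p.2.2}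
  have hC : MeasurableSet C :=
    (measurableSet_le (measurable_fst.comp measurable_fst)
        (measurable_fst.comp measurable_snd)).inter
      (measurableSet_le (measurable_snd.comp measurable_fst)
        (measurable_snd.comp measurable_snd))
  have hS : Measurable fun ω => (S₁ ω, S₂ ω) := hS₁.prodMk hS₂
  have hg₁₂ : Measurable fun ω => (g₁ ω, g₂ ω) := hg₁.prodMk hg₂
  have hlaw : P.map (fun ω => (g₁ ω, g₂ ω)) = (expMeasure r).prod (expMeasure r) := by
    rw [(indepFun_iff_map_prod_eq_prod_map_map hg₁.aemeasurable hg₂.aemeasurable).mp hg,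
      hg₁law, hg₂law]
  calc P {ω | S₁ ω ≤ g₁ ω ∧ S₂ ω ≤ g₂ ω}
      = (P.map fun ω => ((S₁ ω, S₂ ω), (g₁ ω, g₂ ω))) C := by
        rw [Measure.map_apply (hS.prodMk hg₁₂) hC]
        rfl
    _ = ∫⁻ ω, (expMeasure r).prod (expMeasure r) (Prod.mk (S₁ ω, S₂ ω) ⁻¹' C) ∂P := by
        rw [(indepFun_iff_map_prod_eq_prod_map_map hS.aemeasurable hg₁₂.aemeasurable).mp hind,
          hlaw, Measure.prod_apply hC, lintegral_map (measurable_measure_prodMk_left hC) hS]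
    _ = _ := by
        refine lintegral_congr_ae ?_
        filter_upwards [hS₁0, hS₂0] with ω h₁ h₂
        rw [show Prod.mk (S₁ ω, S₂ ω) ⁻¹' C = Ici (S₁ ω) ×ˢ Ici (S₂ ω) from rfl,
          Measure.prod_prod, expMeasure_Ici hr h₁, expMeasure_Ici hr h₂]

lemma lintegral_exp_neg_mul_prod_expMeasure (ν : Measure ℝ) [SFinite ν] {θ₁ θ₂ : ℝ}
    {c₁ c₂ : ℝ → ℝ} (hθ₁ : 0 ≤ θ₁) (hθ₂ : 0 ≤ θ₂) (hc₁ : Measurable c₁) (hc₂ : Measurable c₂)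
    (hc₁0 : ∀ x, 0 ≤ c₁ x) (hc₂0 : ∀ x, 0 ≤ c₂ x) :
    ∫⁻ p, ENNReal.ofReal (exp (-(θ₁ * (c₁ p.1 * p.2.1)))) *
        ENNReal.ofReal (exp (-(θ₂ * (c₂ p.1 * p.2.2))))
        ∂ν.prod ((expMeasure 1).prod (expMeasure 1)) =
      ∫⁻ x, ENNReal.ofReal (1 / ((1 + θ₁ * c₁ x) * (1 + θ₂ * c₂ x))) ∂ν := by
  have : IsProbabilityMeasure (expMeasure 1) := isProbabilityMeasure_expMeasure one_pos
  rw [lintegral_prod _ (by fun_prop)]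
  refine lintegral_congr fun x => ?_
  simp only [← mul_assoc]
  rw [lintegral_prod_mul (f := fun u => ENNReal.ofReal (exp (-(θ₁ * c₁ x * u))))
      (g := fun v => ENNReal.ofReal (exp (-(θ₂ * c₂ x * v)))) (by fun_prop) (by fun_prop),
    lintegral_exp_neg_mul_expMeasure one_pos (mul_nonneg hθ₁ (hc₁0 x)),
    lintegral_exp_neg_mul_expMeasure one_pos (mul_nonneg hθ₂ (hc₂0 x)),
    ← ENNReal.ofReal_mul (div_nonneg zero_le_one (by nlinarith [hc₁0 x])),
    div_mul_div_comm, one_mul]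

section SubfamilySigmaAlgebra

variable {Ω ι : Type*} {β : ι → Type*} [∀ i, MeasurableSpace (β i)]

abbrev sigmaOf (F : ∀ i, Ω → β i) (S : Set ι) : MeasurableSpace Ω :=
  ⨆ i ∈ S, MeasurableSpace.comap (F i) inferInstance

lemma measurable_sigmaOf {F : ∀ i, Ω → β i} {S : Set ι} {i : ι} (hi : i ∈ S) :
    Measurable[sigmaOf F S] (F i) :=
  Measurable.of_comap_le
    (le_iSup₂ (f := fun j (_ : j ∈ S) => MeasurableSpace.comap (F j) inferInstance) i hi)

variable [MeasurableSpace Ω]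

lemma sigmaOf_le {F : ∀ i, Ω → β i} (hF : ∀ i, Measurable (F i)) (S : Set ι) :
    sigmaOf F S ≤ ‹MeasurableSpace Ω› :=
  iSup₂_le fun i _ => (hF i).comap_le

lemma iIndepFun.indep_sigmaOf {P : Measure Ω} {F : ∀ i, Ω → β i} (h : iIndepFun F P)
    (hF : ∀ i, Measurable (F i)) {S T : Set ι} (hST : Disjoint S T) :
    Indep (sigmaOf F S) (sigmaOf F T) P :=
  indep_iSup_of_disjoint (fun i => (hF i).comap_le) ((iIndepFun_iff_iIndep _ F P).mp h) hST

end SubfamilySigmaAlgebra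

end ProbabilityTheory

open ProbabilityTheory

section TwoLinks

variable {Ω : Type*} {N : Ω → ℕ} {X h₁ h₂ : ℕ → Ω → ℝ} {g₁ g₂ : Ω → ℝ} {θ₁ θ₂ : ℝ} {c₁ c₂ : ℝ → ℝ}

def MixIdx₂.triple (k : ℕ) : Set MixIdx₂ := {.X k, .H1 k, .H2 k}

lemma measurable_triple_sigmaOf {k : ℕ} {S : Set MixIdx₂} (hS : MixIdx₂.triple k ⊆ S) :
    Measurable[sigmaOf (mixFam₂ N X h₁ h₂ g₁ g₂) S] fun ω => (X k ω, h₁ k ω, h₂ k ω) := by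
  have hcoord : ∀ i ∈ MixIdx₂.triple k,
      Measurable[sigmaOf (mixFam₂ N X h₁ h₂ g₁ g₂) S] (mixFam₂ N X h₁ h₂ g₁ g₂ i) :=
    fun i hi => measurable_sigmaOf (hS hi)
  exact (hcoord (.X k) (by simp [MixIdx₂.triple])).prodMk
    ((hcoord (.H1 k) (by simp [MixIdx₂.triple])).prodMk
      (hcoord (.H2 k) (by simp [MixIdx₂.triple])))

lemma measurable_sums_sigmaOf {S : Set MixIdx₂} {n : ℕ} (hS : ∀ k < n, MixIdx₂.triple k ⊆ S)
    (hc₁ : Measurable c₁) (hc₂ : Measurable c₂) :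
    Measurable[sigmaOf (mixFam₂ N X h₁ h₂ g₁ g₂) S] fun ω =>
      (θ₁ * ∑ k ∈ Finset.range n, c₁ (X k ω) * h₁ k ω,
        θ₂ * ∑ k ∈ Finset.range n, c₂ (X k ω) * h₂ k ω) := by
  have ht : ∀ k ∈ Finset.range n, Measurable[sigmaOf (mixFam₂ N X h₁ h₂ g₁ g₂) S]
      fun ω => (X k ω, h₁ k ω, h₂ k ω) := fun k hk =>
    measurable_triple_sigmaOf (hS k (Finset.mem_range.mp hk))
  exact ((Finset.measurable_sum _ fun k hk =>
      (hc₁.comp (ht k hk).fst).mul (ht k hk).snd.fst).const_mul θ₁).prodMk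
    ((Finset.measurable_sum _ fun k hk =>
      (hc₂.comp (ht k hk).fst).mul (ht k hk).snd.snd).const_mul θ₂)

lemma measurable_gains_sigmaOf {S : Set MixIdx₂} (hS : {MixIdx₂.G1, MixIdx₂.G2} ⊆ S) :
    Measurable[sigmaOf (mixFam₂ N X h₁ h₂ g₁ g₂) S] fun ω => (g₁ ω, g₂ ω) := by
  have hcoord : ∀ i ∈ ({MixIdx₂.G1, MixIdx₂.G2} : Set MixIdx₂),
      Measurable[sigmaOf (mixFam₂ N X h₁ h₂ g₁ g₂) S] (mixFam₂ N X h₁ h₂ g₁ g₂ i) :=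
    fun i hi => measurable_sigmaOf (hS hi)
  exact (hcoord .G1 (by simp)).prodMk (hcoord .G2 (by simp))

lemma measurableSet_success_sigmaOf {S : Set MixIdx₂} {n : ℕ}
    (hS : ∀ k < n, MixIdx₂.triple k ⊆ S) (hG : {MixIdx₂.G1, MixIdx₂.G2} ⊆ S)
    (hc₁ : Measurable c₁) (hc₂ : Measurable c₂) :
    MeasurableSet[sigmaOf (mixFam₂ N X h₁ h₂ g₁ g₂) S]
      {ω | θ₁ * ∑ k ∈ Finset.range n, c₁ (X k ω) * h₁ k ω ≤ g₁ ω ∧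
        θ₂ * ∑ k ∈ Finset.range n, c₂ (X k ω) * h₂ k ω ≤ g₂ ω} :=
  have hsums :=
    measurable_sums_sigmaOf (θ₁ := θ₁) (θ₂ := θ₂) (N := N) (g₁ := g₁) (g₂ := g₂) hS hc₁ hc₂
  have hgains :=
    measurable_gains_sigmaOf (N := N) (X := X) (h₁ := h₁) (h₂ := h₂) (g₁ := g₁) (g₂ := g₂) hG
  (measurableSet_le hsums.fst hgains.fst).inter (measurableSet_le hsums.snd hgains.snd)

variable [MeasurableSpace Ω] {P : Measure Ω} {ν : Measure ℝ}

lemma measurable_mixFam₂ (hN : Measurable N) (hX : ∀ k, Measurable (X k))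
    (hh₁ : ∀ k, Measurable (h₁ k)) (hh₂ : ∀ k, Measurable (h₂ k))
    (hg₁ : Measurable g₁) (hg₂ : Measurable g₂) :
    ∀ i, Measurable (mixFam₂ N X h₁ h₂ g₁ g₂ i)
  | .X k => hX k
  | .H1 k => hh₁ k
  | .H2 k => hh₂ k
  | .G1 => hg₁
  | .G2 => hg₂
  | .N => hN

lemma lintegral_prod_range_triple
    (hF : ∀ i, Measurable (mixFam₂ N X h₁ h₂ g₁ g₂ i))
    (hind : iIndepFun (mixFam₂ N X h₁ h₂ g₁ g₂) P)
    {Φ : ℝ × ℝ × ℝ → ℝ≥0∞} (hΦ : Measurable Φ) (n : ℕ) :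
    ∫⁻ ω, ∏ k ∈ Finset.range n, Φ (X k ω, h₁ k ω, h₂ k ω) ∂P =
      ∏ k ∈ Finset.range n, ∫⁻ ω, Φ (X k ω, h₁ k ω, h₂ k ω) ∂P := by
  have := hind.isProbabilityMeasure
  induction n with
  | zero => simp
  | succ n ih =>
    have hdisj : Disjoint (⋃ k < n, MixIdx₂.triple k) (MixIdx₂.triple n) := by
      simp only [disjoint_iUnion_left]
      intro k hk
      simp [MixIdx₂.triple, hk.ne']
    have hprod : Measurable[sigmaOf (mixFam₂ N X h₁ h₂ g₁ g₂) (⋃ k < n, MixIdx₂.triple k)]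
        fun ω => ∏ k ∈ Finset.range n, Φ (X k ω, h₁ k ω, h₂ k ω) :=
      Finset.measurable_prod _ fun k hk =>
        hΦ.comp (measurable_triple_sigmaOf (subset_biUnion_of_mem (Finset.mem_range.mp hk)))
    have hlast : Measurable[sigmaOf (mixFam₂ N X h₁ h₂ g₁ g₂) (MixIdx₂.triple n)]
        fun ω => Φ (X n ω, h₁ n ω, h₂ n ω) :=
      hΦ.comp (measurable_triple_sigmaOf subset_rfl)
    simp_rw [Finset.prod_range_succ]
    rw [lintegral_mul_eq_lintegral_mul_lintegral_of_independent_measurableSpace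
      (sigmaOf_le hF _) (sigmaOf_le hF _) (hind.indep_sigmaOf hF hdisj) hprod hlast, ih]

lemma map_triple_eq_prod [IsFiniteMeasure P]
    (hF : ∀ i, Measurable (mixFam₂ N X h₁ h₂ g₁ g₂ i))
    (hind : iIndepFun (mixFam₂ N X h₁ h₂ g₁ g₂) P)
    (k : ℕ) :
    P.map (fun ω => (X k ω, h₁ k ω, h₂ k ω)) =
      (P.map (X k)).prod ((P.map (h₁ k)).prod (P.map (h₂ k))) :=
  map_prodMk_prodMk_eq_prod_of_indepFun (hF (.X k)) (hF (.H1 k)) (hF (.H2 k))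
    (hind.indepFun_prodMk hF (.H1 k) (.H2 k) (.X k) (by simp) (by simp)).symm
    (hind.indepFun (by simp : MixIdx₂.H1 k ≠ .H2 k))

lemma lintegral_exp_neg_triple [IsFiniteMeasure P] [IsFiniteMeasure ν]
    (hF : ∀ i, Measurable (mixFam₂ N X h₁ h₂ g₁ g₂ i))
    (hind : iIndepFun (mixFam₂ N X h₁ h₂ g₁ g₂) P)
    (hXlaw : ∀ k, P.map (X k) = ν) (hh₁law : ∀ k, P.map (h₁ k) = expMeasure 1)
    (hh₂law : ∀ k, P.map (h₂ k) = expMeasure 1) (hθ₁ : 0 ≤ θ₁) (hθ₂ : 0 ≤ θ₂)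
    (hc₁ : Measurable c₁) (hc₂ : Measurable c₂) (hc₁0 : ∀ x, 0 ≤ c₁ x) (hc₂0 : ∀ x, 0 ≤ c₂ x)
    (k : ℕ) :
    ∫⁻ ω, ENNReal.ofReal (exp (-(θ₁ * (c₁ (X k ω) * h₁ k ω)))) *
        ENNReal.ofReal (exp (-(θ₂ * (c₂ (X k ω) * h₂ k ω)))) ∂P =
      ENNReal.ofReal (∫ x, 1 / ((1 + θ₁ * c₁ x) * (1 + θ₂ * c₂ x)) ∂ν) := by
  have ha0 : ∀ x, 0 ≤ θ₁ * c₁ x := fun x => mul_nonneg hθ₁ (hc₁0 x)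
  have hb0 : ∀ x, 0 ≤ θ₂ * c₂ x := fun x => mul_nonneg hθ₂ (hc₂0 x)
  rw [← lintegral_map (f := fun p : ℝ × ℝ × ℝ => ENNReal.ofReal (exp (-(θ₁ * (c₁ p.1 * p.2.1)))) *
      ENNReal.ofReal (exp (-(θ₂ * (c₂ p.1 * p.2.2))))) (by fun_prop)
      (show Measurable fun ω => (X k ω, h₁ k ω, h₂ k ω) from
        (hF (.X k)).prodMk ((hF (.H1 k)).prodMk (hF (.H2 k)))),
    map_triple_eq_prod hF hind k, hXlaw k, hh₁law k, hh₂law k,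
    lintegral_exp_neg_mul_prod_expMeasure ν hθ₁ hθ₂ hc₁ hc₂ hc₁0 hc₂0,
    ofReal_integral_eq_lintegral_ofReal
      (integrable_one_div_one_add_mul_one_add (hc₁.const_mul θ₁) (hc₂.const_mul θ₂) ha0 hb0)
      (ae_of_all _ fun x => by have := ha0 x; have := hb0 x; positivity)]

lemma measure_success_eq_pow [IsFiniteMeasure ν]
    (hF : ∀ i, Measurable (mixFam₂ N X h₁ h₂ g₁ g₂ i))
    (hind : iIndepFun (mixFam₂ N X h₁ h₂ g₁ g₂) P)
    (hXlaw : ∀ k, P.map (X k) = ν) (hh₁law : ∀ k, P.map (h₁ k) = expMeasure 1)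
    (hh₂law : ∀ k, P.map (h₂ k) = expMeasure 1) (hg₁law : P.map g₁ = expMeasure 1)
    (hg₂law : P.map g₂ = expMeasure 1) (hθ₁ : 0 ≤ θ₁) (hθ₂ : 0 ≤ θ₂)
    (hc₁ : Measurable c₁) (hc₂ : Measurable c₂) (hc₁0 : ∀ x, 0 ≤ c₁ x) (hc₂0 : ∀ x, 0 ≤ c₂ x)
    (n : ℕ) :
    P {ω | θ₁ * ∑ k ∈ Finset.range n, c₁ (X k ω) * h₁ k ω ≤ g₁ ω ∧
        θ₂ * ∑ k ∈ Finset.range n, c₂ (X k ω) * h₂ k ω ≤ g₂ ω} =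
      ENNReal.ofReal (∫ x, 1 / ((1 + θ₁ * c₁ x) * (1 + θ₂ * c₂ x)) ∂ν) ^ n := by
  have := hind.isProbabilityMeasure
  have hdisj : Disjoint (⋃ k < n, MixIdx₂.triple k) {MixIdx₂.G1, MixIdx₂.G2} := by
    simp [MixIdx₂.triple]
  have hS : Measurable[sigmaOf (mixFam₂ N X h₁ h₂ g₁ g₂) (⋃ k < n, MixIdx₂.triple k)] fun ω =>
      (θ₁ * ∑ k ∈ Finset.range n, c₁ (X k ω) * h₁ k ω,
        θ₂ * ∑ k ∈ Finset.range n, c₂ (X k ω) * h₂ k ω) :=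
    measurable_sums_sigmaOf (fun k hk => subset_biUnion_of_mem (u := MixIdx₂.triple) hk) hc₁ hc₂
  have hg : Measurable[sigmaOf (mixFam₂ N X h₁ h₂ g₁ g₂) {MixIdx₂.G1, MixIdx₂.G2}] fun ω =>
      (g₁ ω, g₂ ω) :=
    measurable_gains_sigmaOf subset_rfl
  have hS' := hS.mono (sigmaOf_le hF _) le_rfl
  rw [measure_le_and_le_eq_lintegral_of_indepFun (g₁ := g₁) (g₂ := g₂) one_pos hS'.fst hS'.snd
      (hF .G1) (hF .G2)
      (ae_nonneg_mul_sum_of_map_eq_expMeasure hθ₁ (fun k ω => hc₁0 (X k ω)) (fun k => hF (.H1 k))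
        hh₁law _)
      (ae_nonneg_mul_sum_of_map_eq_expMeasure hθ₂ (fun k ω => hc₂0 (X k ω)) (fun k => hF (.H2 k))
        hh₂law _)
      ((hind.indep_sigmaOf hF hdisj).indepFun_of_measurable hS hg)
      (hind.indepFun (i := .G1) (j := .G2) (by simp)) hg₁law hg₂law]
  simp only [one_mul, ofReal_exp_neg_mul_sum, ← Finset.prod_mul_distrib]
  rw [lintegral_prod_range_triple hF hind
      (Φ := fun p => ENNReal.ofReal (exp (-(θ₁ * (c₁ p.1 * p.2.1)))) *
        ENNReal.ofReal (exp (-(θ₂ * (c₂ p.1 * p.2.2))))) (by fun_prop),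
    Finset.prod_congr rfl fun k _ =>
      lintegral_exp_neg_triple hF hind hXlaw hh₁law hh₂law hθ₁ hθ₂ hc₁ hc₂ hc₁0 hc₂0 k,
    Finset.prod_const, Finset.card_range]

lemma indepSet_preimage_success (hF : ∀ i, Measurable (mixFam₂ N X h₁ h₂ g₁ g₂ i))
    (hind : iIndepFun (mixFam₂ N X h₁ h₂ g₁ g₂) P) (hc₁ : Measurable c₁) (hc₂ : Measurable c₂)
    (n : ℕ) :
    IndepSet (N ⁻¹' {n})
      {ω | θ₁ * ∑ k ∈ Finset.range n, c₁ (X k ω) * h₁ k ω ≤ g₁ ω ∧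
        θ₂ * ∑ k ∈ Finset.range n, c₂ (X k ω) * h₂ k ω ≤ g₂ ω} P := by
  have hN : Measurable[sigmaOf (mixFam₂ N X h₁ h₂ g₁ g₂) {MixIdx₂.N}] N :=
    measurable_sigmaOf (F := mixFam₂ N X h₁ h₂ g₁ g₂) (i := .N) rfl
  refine (hind.indep_sigmaOf hF disjoint_compl_right).indepSet_of_measurableSet
    (hN (measurableSet_singleton n)) (measurableSet_success_sigmaOf ?_ ?_ hc₁ hc₂)
  · intro k _ i hi
    simp only [MixIdx₂.triple, mem_insert_iff, mem_singleton_iff] at hi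
    rcases hi with rfl | rfl | rfl <;> simp
  · simp

end TwoLinks

theorem stmt_10_general {Ω : Type*} [MeasurableSpace Ω] (P : Measure Ω)
    (μ : ℝ) (hμ : 0 ≤ μ) (ν : Measure ℝ) [IsProbabilityMeasure ν]
    (N : Ω → ℕ) (X h₁ h₂ : ℕ → Ω → ℝ) (g₁ g₂ : Ω → ℝ)
    (hN : Measurable N) (hX : ∀ k, Measurable (X k))
    (hh₁ : ∀ k, Measurable (h₁ k)) (hh₂ : ∀ k, Measurable (h₂ k))
    (hg₁ : Measurable g₁) (hg₂ : Measurable g₂)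
    (hNlaw : Measure.map N P = poissonMeasure μ.toNNReal)
    (hXlaw : ∀ k, Measure.map (X k) P = ν)
    (hh₁law : ∀ k, Measure.map (h₁ k) P = expMeasure 1)
    (hh₂law : ∀ k, Measure.map (h₂ k) P = expMeasure 1)
    (hg₁law : Measure.map g₁ P = expMeasure 1)
    (hg₂law : Measure.map g₂ P = expMeasure 1)
    (hindep : iIndepFun (mixFam₂ N X h₁ h₂ g₁ g₂) P)
    (θ₁ θ₂ : ℝ) (hθ₁ : 0 ≤ θ₁) (hθ₂ : 0 ≤ θ₂)
    (c₁ c₂ : ℝ → ℝ) (hc₁ : Measurable c₁) (hc₂ : Measurable c₂)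
    (hc₁0 : ∀ x, 0 ≤ c₁ x) (hc₂0 : ∀ x, 0 ≤ c₂ x) :
    P {ω | θ₁ * ∑ k ∈ Finset.range (N ω), c₁ (X k ω) * h₁ k ω ≤ g₁ ω ∧
           θ₂ * ∑ k ∈ Finset.range (N ω), c₂ (X k ω) * h₂ k ω ≤ g₂ ω} =
      ENNReal.ofReal (Real.exp
        (-(μ * ∫ x, (1 - 1 / ((1 + θ₁ * c₁ x) * (1 + θ₂ * c₂ x))) ∂ν))) := by
  have hF := measurable_mixFam₂ hN hX hh₁ hh₂ hg₁ hg₂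
  have hint := integrable_one_div_one_add_mul_one_add (ν := ν) (hc₁.const_mul θ₁)
    (hc₂.const_mul θ₂) (fun x => mul_nonneg hθ₁ (hc₁0 x)) (fun x => mul_nonneg hθ₂ (hc₂0 x))
  have hI0 : 0 ≤ ∫ x, 1 / ((1 + θ₁ * c₁ x) * (1 + θ₂ * c₂ x)) ∂ν :=
    integral_nonneg fun x => by have := hc₁0 x; have := hc₂0 x; positivity
  calc _ = ∫⁻ n, P {ω | θ₁ * ∑ k ∈ Finset.range n, c₁ (X k ω) * h₁ k ω ≤ g₁ ω ∧
          θ₂ * ∑ k ∈ Finset.range n, c₂ (X k ω) * h₂ k ω ≤ g₂ ω} ∂P.map N :=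
        measure_setOf_mem_eq_lintegral_map hN
          (fun n => sigmaOf_le hF _ _ (measurableSet_success_sigmaOf
            (fun k _ => subset_univ _) (subset_univ _) hc₁ hc₂))
          (indepSet_preimage_success hF hindep hc₁ hc₂)
    _ = ∫⁻ n, ENNReal.ofReal (∫ x, 1 / ((1 + θ₁ * c₁ x) * (1 + θ₂ * c₂ x)) ∂ν) ^ n
          ∂poissonMeasure μ.toNNReal := by
        rw [hNlaw]
        exact lintegral_congr (measure_success_eq_pow hF hindep hXlaw hh₁law hh₂law hg₁law hg₂law
          hθ₁ hθ₂ hc₁ hc₂ hc₁0 hc₂0)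
    _ = _ := by
        rw [lintegral_pow_poissonMeasure _ hI0, Real.coe_toNNReal μ hμ,
          integral_sub (integrable_const 1) hint, integral_const, probReal_univ, one_smul]

/-- If `N` is Poisson(`μ`), the `X k` are i.i.d. with common law `ν`, `g₁`, `g₂` and the
`h₁ k`, `h₂ k` are i.i.d. exponential with rate 1, all mutually independent, `θ₁, θ₂ ≥ 0`
and `c₁, c₂ : ℝ → [0,∞)` are measurable, then
`P(g₁ ≥ θ₁ Σ_{k<N} c₁ (X k) h₁ k ∧ g₂ ≥ θ₂ Σ_{k<N} c₂ (X k) h₂ k)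
  = exp (-μ ∫ (1 - 1/((1 + θ₁ c₁ x)(1 + θ₂ c₂ x))) dν(x))`. -/
theorem stmt_10 {Ω : Type*} [MeasurableSpace Ω] (P : Measure Ω) [IsProbabilityMeasure P]
    (μ : ℝ) (hμ : 0 ≤ μ) (ν : Measure ℝ) [IsProbabilityMeasure ν]
    (N : Ω → ℕ) (X h₁ h₂ : ℕ → Ω → ℝ) (g₁ g₂ : Ω → ℝ)
    (hN : Measurable N) (hX : ∀ k, Measurable (X k))
    (hh₁ : ∀ k, Measurable (h₁ k)) (hh₂ : ∀ k, Measurable (h₂ k))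
    (hg₁ : Measurable g₁) (hg₂ : Measurable g₂)
    (hNlaw : Measure.map N P = poissonMeasure μ.toNNReal)
    (hXlaw : ∀ k, Measure.map (X k) P = ν)
    (hh₁law : ∀ k, Measure.map (h₁ k) P = expMeasure 1)
    (hh₂law : ∀ k, Measure.map (h₂ k) P = expMeasure 1)
    (hg₁law : Measure.map g₁ P = expMeasure 1)
    (hg₂law : Measure.map g₂ P = expMeasure 1)
    (hindep : iIndepFun (mixFam₂ N X h₁ h₂ g₁ g₂) P)
    (θ₁ θ₂ : ℝ) (hθ₁ : 0 ≤ θ₁) (hθ₂ : 0 ≤ θ₂)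
    (c₁ c₂ : ℝ → ℝ) (hc₁ : Measurable c₁) (hc₂ : Measurable c₂)
    (hc₁0 : ∀ x, 0 ≤ c₁ x) (hc₂0 : ∀ x, 0 ≤ c₂ x) :
    P {ω | θ₁ * ∑ k ∈ Finset.range (N ω), c₁ (X k ω) * h₁ k ω ≤ g₁ ω ∧
           θ₂ * ∑ k ∈ Finset.range (N ω), c₂ (X k ω) * h₂ k ω ≤ g₂ ω} =
      ENNReal.ofReal (Real.exp
        (-(μ * ∫ x, (1 - 1 / ((1 + θ₁ * c₁ x) * (1 + θ₂ * c₂ x))) ∂ν))) :=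
  stmt_10_general P μ hμ ν N X h₁ h₂ g₁ g₂ hN hX hh₁ hh₂ hg₁ hg₂ hNlaw hXlaw hh₁law hh₂law hg₁law
    hg₂law hindep θ₁ θ₂ hθ₁ hθ₂ c₁ c₂ hc₁ hc₂ hc₁0 hc₂0
end
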